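/- Let a₁, …, a₆ ∈ ℂ and θ₁, …, θ₆ ∈ ℝ with θ₁ + θ₂ + θ₃ + θ₄ + θ₅ + θ₆ = (2n+1)π for some integer n. For a permutation σ = (σ₁,…,σ₆) of (1,…,6) define b(σ) := (1/2)·Σ_{m=1}^{6} a_{σ_m}·e^{i(θ_{σ₁}+⋯+θ_{σ_{m−1}})}·(1 − e^{iθ_{σ_m}}) (the fixed point of the composition of the six rotations about a_{σ₁},…,a_{σ₆} through θ_{σ₁},…,θ_{σ₆} in this order). Then b(1,2,3,4,5,6) − b(1,2,3,5,6,4) + b(2,3,1,5,6,4) − b(2,3,1,6,4,5) + b(3,1,2,6,4,5) − b(3,1,2,4,5,6) = 0. -/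
import Mathlib


/-- The fixed point of the composition of six rotations (each `pᵢ = (aᵢ, θᵢ)` is a
center of rotation together with a rotation angle), when the six angles sum to an odd
multiple of `π`. -/
noncomputable def b6 (p₁ p₂ p₃ p₄ p₅ p₆ : ℂ × ℝ) : ℂ :=
  (1 / 2) * (p₁.1 * (1 - Complex.exp (p₁.2 * Complex.I))
    + p₂.1 * Complex.exp (p₁.2 * Complex.I) * (1 - Complex.exp (p₂.2 * Complex.I))
    + p₃.1 * Complex.exp ((p₁.2 + p₂.2 : ℝ) * Complex.I) * (1 - Complex.exp (p₃.2 * Complex.I))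
    + p₄.1 * Complex.exp ((p₁.2 + p₂.2 + p₃.2 : ℝ) * Complex.I)
        * (1 - Complex.exp (p₄.2 * Complex.I))
    + p₅.1 * Complex.exp ((p₁.2 + p₂.2 + p₃.2 + p₄.2 : ℝ) * Complex.I)
        * (1 - Complex.exp (p₅.2 * Complex.I))
    + p₆.1 * Complex.exp ((p₁.2 + p₂.2 + p₃.2 + p₄.2 + p₅.2 : ℝ) * Complex.I)
        * (1 - Complex.exp (p₆.2 * Complex.I)))

theorem hexagon_relation (a₁ a₂ a₃ a₄ a₅ a₆ : ℂ) (θ₁ θ₂ θ₃ θ₄ θ₅ θ₆ : ℝ)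
    (h : ∃ n : ℤ, θ₁ + θ₂ + θ₃ + θ₄ + θ₅ + θ₆ = (2 * n + 1) * Real.pi) :
    b6 (a₁, θ₁) (a₂, θ₂) (a₃, θ₃) (a₄, θ₄) (a₅, θ₅) (a₆, θ₆)
      - b6 (a₁, θ₁) (a₂, θ₂) (a₃, θ₃) (a₅, θ₅) (a₆, θ₆) (a₄, θ₄)
      + b6 (a₂, θ₂) (a₃, θ₃) (a₁, θ₁) (a₅, θ₅) (a₆, θ₆) (a₄, θ₄)
      - b6 (a₂, θ₂) (a₃, θ₃) (a₁, θ₁) (a₆, θ₆) (a₄, θ₄) (a₅, θ₅)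
      + b6 (a₃, θ₃) (a₁, θ₁) (a₂, θ₂) (a₆, θ₆) (a₄, θ₄) (a₅, θ₅)
      - b6 (a₃, θ₃) (a₁, θ₁) (a₂, θ₂) (a₄, θ₄) (a₅, θ₅) (a₆, θ₆) = 0 := by
  simp only [b6, Complex.ofReal_add, add_mul, Complex.exp_add]
  ring
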